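/- Let P, Q be pmfs on a finite set Ω with Q(ω) > 0 whenever P(ω) > 0, and let A ⊆ Ω be an event. Then -log Q(A) ≤ D(P_A ‖ Q) where P_A(ω) := P(ω)1{ω∈A}/P(A) is P conditioned on A (assuming P(A) > 0), and D(P_A ‖ Q) ≤ D(P_A ‖ P) + ∑_ω P_A(ω) log(P(ω)/Q(ω)). -/

import Mathlib

/-!
Termwise, `p - r ≤ p log (p / r)` (from `1 - 1/x ≤ log x`), so the divergence of a probability
vector `p` from any sub-probability vector `r` is nonnegative. Taking `r = Q / Q(A)` on `A` gives
`0 ≤ D(P_A ‖ Q) + log Q(A)`. The second inequality is an equality: on the support of `P_A`,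
`log (P_A / Q) = log (P_A / P) + log (P / Q)`.
-/

open scoped Classical

open Finset Real

lemma sub_le_mul_log_div {p r : ℝ} (hp : 0 ≤ p) (hr : 0 ≤ r) (hpr : 0 < p → 0 < r) :
    p - r ≤ p * log (p / r) := by
  rcases hp.eq_or_lt with rfl | hp
  · simpa using hr
  have hr := hpr hp
  have hlog := one_sub_inv_le_log_of_pos (div_pos hp hr)
  calc p - r = p * (1 - (p / r)⁻¹) := by field_simp
    _ ≤ p * log (p / r) := mul_le_mul_of_nonneg_left hlog hp.le

lemma sum_mul_log_div_nonneg {ι : Type*} (s : Finset ι) {p r : ι → ℝ}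
    (hp : ∀ i ∈ s, 0 ≤ p i) (hr : ∀ i ∈ s, 0 ≤ r i) (hpr : ∀ i ∈ s, 0 < p i → 0 < r i)
    (hsum : ∑ i ∈ s, r i ≤ ∑ i ∈ s, p i) :
    0 ≤ ∑ i ∈ s, p i * log (p i / r i) :=
  calc (0 : ℝ) ≤ ∑ i ∈ s, (p i - r i) := by rw [sum_sub_distrib]; linarith
    _ ≤ ∑ i ∈ s, p i * log (p i / r i) :=
      sum_le_sum fun i hi => sub_le_mul_log_div (hp i hi) (hr i hi) (hpr i hi)

lemma neg_log_sum_le_sum_mul_log_div {ι : Type*} (s : Finset ι) {p q : ι → ℝ}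
    (hp : ∀ i ∈ s, 0 ≤ p i) (hq : ∀ i ∈ s, 0 ≤ q i) (hpq : ∀ i ∈ s, 0 < p i → 0 < q i)
    (hp1 : ∑ i ∈ s, p i = 1) :
    -log (∑ i ∈ s, q i) ≤ ∑ i ∈ s, p i * log (p i / q i) := by
  set c := ∑ i ∈ s, q i
  have hc : 0 < c := by
    obtain ⟨i, hi, hpi⟩ := exists_lt_of_sum_lt (s := s) (f := fun _ => (0 : ℝ)) (g := p)
      (by simp [hp1])
    exact sum_pos' hq ⟨i, hi, hpq i hi hpi⟩
  have hgibbs := sum_mul_log_div_nonneg s (r := fun i => q i / c) hp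
    (fun i hi => div_nonneg (hq i hi) hc.le) (fun i hi h => div_pos (hpq i hi h) hc)
    (by rw [← sum_div, div_self hc.ne', hp1])
  have hshift : ∀ i ∈ s, p i * log (p i / (q i / c)) = p i * log (p i / q i) + p i * log c := by
    intro i hi
    rcases (hp i hi).eq_or_lt with h | h
    · simp [← h]
    rw [div_div_eq_mul_div, mul_div_right_comm, log_mul (div_pos h (hpq i hi h)).ne' hc.ne',
      mul_add]
  rw [sum_congr rfl hshift, sum_add_distrib, ← sum_mul, hp1, one_mul] at hgibbs
  linarith

lemma mul_log_div_eq_add (a : ℝ) {b c : ℝ} (hb : b ≠ 0) (hc : c ≠ 0) :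
    a * log (a / c) = a * log (a / b) + a * log (b / c) := by
  rcases eq_or_ne a 0 with rfl | ha
  · simp
  rw [log_div ha hc, log_div ha hb, log_div hb hc]
  ring

theorem stein_change_of_measure_general
    {Ω : Type*} [Fintype Ω]
    (P Q : Ω → ℝ)
    (hP0 : ∀ ω, 0 ≤ P ω)
    (hQ0 : ∀ ω, 0 ≤ Q ω)
    (habs : ∀ ω, 0 < P ω → 0 < Q ω)
    (A : Finset Ω) (hPA : 0 < ∑ ω ∈ A, P ω) :
    (-Real.log (∑ ω ∈ A, Q ω)
        ≤ ∑ ω ∈ A, (P ω / (∑ ω' ∈ A, P ω'))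
            * Real.log ((P ω / (∑ ω' ∈ A, P ω')) / Q ω))
    ∧ (∑ ω ∈ A, (P ω / (∑ ω' ∈ A, P ω'))
            * Real.log ((P ω / (∑ ω' ∈ A, P ω')) / Q ω)
        ≤ (∑ ω ∈ A, (P ω / (∑ ω' ∈ A, P ω'))
              * Real.log ((P ω / (∑ ω' ∈ A, P ω')) / P ω))
          + ∑ ω ∈ A, (P ω / (∑ ω' ∈ A, P ω')) * Real.log (P ω / Q ω)) := by
  set PA := ∑ ω ∈ A, P ω
  have hcond_sum : ∑ ω ∈ A, P ω / PA = 1 := by rw [← sum_div, div_self hPA.ne']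
  refine ⟨neg_log_sum_le_sum_mul_log_div A (fun ω _ => div_nonneg (hP0 ω) hPA.le)
    (fun ω _ => hQ0 ω) (fun ω _ h => habs ω ((div_pos_iff_of_pos_right hPA).mp h)) hcond_sum,
    le_of_eq ?_⟩
  rw [← sum_add_distrib]
  refine sum_congr rfl fun ω _ => ?_
  rcases (hP0 ω).eq_or_lt with h | h
  · simp [← h]
  · exact mul_log_div_eq_add _ h.ne' (habs ω h).ne'

/-- Change-of-measure bound for the Stein exponent. `P_A ω = P ω / P(A)` on `A`. -/
theorem stein_change_of_measure
    {Ω : Type*} [Fintype Ω]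
    (P Q : Ω → ℝ)
    (hP0 : ∀ ω, 0 ≤ P ω) (hP1 : ∑ ω, P ω = 1)
    (hQ0 : ∀ ω, 0 ≤ Q ω) (hQ1 : ∑ ω, Q ω = 1)
    (habs : ∀ ω, 0 < P ω → 0 < Q ω)
    (A : Finset Ω) (hPA : 0 < ∑ ω ∈ A, P ω) :
    (-Real.log (∑ ω ∈ A, Q ω)
        ≤ ∑ ω ∈ A, (P ω / (∑ ω' ∈ A, P ω'))
            * Real.log ((P ω / (∑ ω' ∈ A, P ω')) / Q ω))
    ∧ (∑ ω ∈ A, (P ω / (∑ ω' ∈ A, P ω'))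
            * Real.log ((P ω / (∑ ω' ∈ A, P ω')) / Q ω)
        ≤ (∑ ω ∈ A, (P ω / (∑ ω' ∈ A, P ω'))
              * Real.log ((P ω / (∑ ω' ∈ A, P ω')) / P ω))
          + ∑ ω ∈ A, (P ω / (∑ ω' ∈ A, P ω')) * Real.log (P ω / Q ω)) :=
  stein_change_of_measure_general P Q hP0 hQ0 habs A hPA
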